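/- Let m > 0. Define T(r) := −(1/2)·(r − 2m·log(1 + r/(2m))) for r > 0, and for r > 0, φ ∈ ℝ set Φ(r, φ) := (T(r), (r·cos φ, r·sin φ, 0)) ∈ ℝ × ℝ³. Then for every r > 0, φ ∈ ℝ, and (a, b) ∈ ℝ², the tangent vector a·∂Φ/∂r + b·∂Φ/∂φ, which has time component a·T'(r) = −(a/2)·(r/(r + 2m)) and spatial component a·(cos φ, sin φ, 0) + b·r·(−sin φ, cos φ, 0), satisfies Q_N(a·T'(r), a·(cos φ, sin φ, 0) + b·r·(−sin φ, cos φ, 0), (r·cos φ, r·sin φ, 0)) = (3r/(4(r + 2m)))·a² + r²·b². In particular every nonzero tangent vector to the surface S_T parametrized by Φ is spacelike. -/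

import Mathlib

/-- The negative-mass Schwarzschild quadratic form with mass parameter `m > 0`,
evaluated on a velocity `(t', x')` at a point with spatial part `x ≠ 0`. -/
noncomputable def QN (m : ℝ) (t' : ℝ) (x' x : EuclideanSpace ℝ (Fin 3)) : ℝ :=
  -(1 + 2 * m / ‖x‖) * t' ^ 2 + ‖x'‖ ^ 2
    - (2 * m / ((‖x‖ + 2 * m) * ‖x‖ ^ 2)) * (inner ℝ x x' : ℝ) ^ 2

/-- The vector `(a, b, c)` of `ℝ³`, regarded as a point of Euclidean 3-space. -/
noncomputable def vec3 (a b c : ℝ) : EuclideanSpace ℝ (Fin 3) :=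
  (WithLp.equiv 2 (Fin 3 → ℝ)).symm ![a, b, c]

/-!
In the polar frame of the plane `z = 0` the spatial tangent vector has radial component `a`
and angular component `r b`, so `Q_N` collapses to
`-(1 + 2m/r) T'² a² + a² + r² b² - (2m/(r + 2m)) a²`. Since `T' = -(1/2) r/(r + 2m)`, the time
term costs only a quarter of what the radial terms contribute, `r/(r + 2m)`, which leaves the
positive coefficient `3r/(4(r + 2m))` in front of `a²`.
-/

open Real

lemma vec3_smul (c a₁ a₂ a₃ : ℝ) : c • vec3 a₁ a₂ a₃ = vec3 (c * a₁) (c * a₂) (c * a₃) := by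
  ext i; fin_cases i <;> simp [vec3]

lemma vec3_add (a₁ a₂ a₃ b₁ b₂ b₃ : ℝ) :
    vec3 a₁ a₂ a₃ + vec3 b₁ b₂ b₃ = vec3 (a₁ + b₁) (a₂ + b₂) (a₃ + b₃) := by
  ext i; fin_cases i <;> simp [vec3]

lemma inner_vec3 (a₁ a₂ a₃ b₁ b₂ b₃ : ℝ) :
    inner ℝ (vec3 a₁ a₂ a₃) (vec3 b₁ b₂ b₃) = a₁ * b₁ + a₂ * b₂ + a₃ * b₃ := by
  simp [vec3, PiLp.inner_apply, Fin.sum_univ_three]; ring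

lemma norm_vec3_sq (a₁ a₂ a₃ : ℝ) : ‖vec3 a₁ a₂ a₃‖ ^ 2 = a₁ ^ 2 + a₂ ^ 2 + a₃ ^ 2 := by
  rw [← real_inner_self_eq_norm_sq, inner_vec3]; ring

section Polar

variable (r φ a b : ℝ)

lemma norm_vec3_polar : ‖vec3 (r * cos φ) (r * sin φ) 0‖ = |r| := by
  rw [← sqrt_sq (norm_nonneg _), norm_vec3_sq, ← sqrt_sq_eq_abs]
  congr 1
  linear_combination r ^ 2 * sin_sq_add_cos_sq φ

lemma polar_tangent_eq :
    a • vec3 (cos φ) (sin φ) 0 + b • vec3 (-(r * sin φ)) (r * cos φ) 0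
      = vec3 (a * cos φ - b * r * sin φ) (a * sin φ + b * r * cos φ) 0 := by
  rw [vec3_smul, vec3_smul, vec3_add]; ring_nf

lemma inner_polar_tangent :
    inner ℝ (vec3 (r * cos φ) (r * sin φ) 0)
      (a • vec3 (cos φ) (sin φ) 0 + b • vec3 (-(r * sin φ)) (r * cos φ) 0) = r * a := by
  rw [polar_tangent_eq, inner_vec3]
  linear_combination r * a * sin_sq_add_cos_sq φ

lemma norm_polar_tangent_sq :
    ‖a • vec3 (cos φ) (sin φ) 0 + b • vec3 (-(r * sin φ)) (r * cos φ) 0‖ ^ 2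
      = a ^ 2 + r ^ 2 * b ^ 2 := by
  rw [polar_tangent_eq, norm_vec3_sq]
  linear_combination (a ^ 2 + r ^ 2 * b ^ 2) * sin_sq_add_cos_sq φ

lemma hasDerivAt_vec3_radial :
    HasDerivAt (fun ρ ↦ vec3 (ρ * cos φ) (ρ * sin φ) 0) (vec3 (cos φ) (sin φ) 0) r := by
  simpa [vec3_smul] using (hasDerivAt_id r).smul_const (vec3 (cos φ) (sin φ) 0)

lemma hasDerivAt_vec3_angular :
    HasDerivAt (fun ψ ↦ vec3 (r * cos ψ) (r * sin ψ) 0)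
      (vec3 (-(r * sin φ)) (r * cos φ) 0) φ := by
  have hf : (fun ψ ↦ vec3 (r * cos ψ) (r * sin ψ) 0)
      = fun ψ ↦ (r * cos ψ) • vec3 1 0 0 + (r * sin ψ) • vec3 0 1 0 := by
    simp [vec3_smul, vec3_add]
  have hv : vec3 (-(r * sin φ)) (r * cos φ) 0
      = (r * -sin φ) • vec3 1 0 0 + (r * cos φ) • vec3 0 1 0 := by
    rw [vec3_smul, vec3_smul, vec3_add]; ring_nf
  rw [hf, hv]
  exact (((hasDerivAt_cos φ).const_mul r).smul_const _).add
    (((hasDerivAt_sin φ).const_mul r).smul_const _)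

end Polar

lemma QN_eq_of_norm_eq_of_inner_eq {m r v t' : ℝ} {x x' : EuclideanSpace ℝ (Fin 3)}
    (hr : r ≠ 0) (hx : ‖x‖ = r) (hv : inner ℝ x x' = r * v) :
    QN m t' x' x = -(1 + 2 * m / r) * t' ^ 2 + ‖x'‖ ^ 2 - 2 * m / (r + 2 * m) * v ^ 2 := by
  rw [QN, hx, hv, mul_comm (r + 2 * m), ← div_div, mul_pow]
  field_simp

lemma hasDerivAt_schwarzschild_time {m r : ℝ} (hm : m ≠ 0) (hr : r + 2 * m ≠ 0) :
    HasDerivAt (fun ρ ↦ -(1 / 2) * (ρ - 2 * m * log (1 + ρ / (2 * m))))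
      (-(1 / 2) * (r / (r + 2 * m))) r := by
  have h2m : 2 * m ≠ 0 := by positivity
  have harg : 1 + r / (2 * m) = (r + 2 * m) / (2 * m) := by rw [one_add_div h2m, add_comm (2 * m)]
  have hlog := (hasDerivAt_log (harg ▸ div_ne_zero hr h2m)).comp r
    (((hasDerivAt_id r).div_const (2 * m)).const_add 1)
  refine (((hasDerivAt_id r).sub (hlog.const_mul (2 * m))).const_mul (-(1 / 2))).congr_deriv ?_
  rw [id, harg]
  field_simp
  ring

lemma mul_sq_add_mul_sq_pos {p q a b : ℝ} (hp : 0 < p) (hq : 0 < q) (hab : (a, b) ≠ (0, 0)) :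
    0 < p * a ^ 2 + q * b ^ 2 := by
  rcases eq_or_ne a 0 with rfl | ha
  · have hb : b ≠ 0 := by rintro rfl; exact hab rfl
    positivity
  · positivity

/-- Let `m > 0`. Define `T(r) := −(1/2)·(r − 2m·log(1 + r/(2m)))` for `r > 0`, and
for `r > 0`, `φ ∈ ℝ` set `Φ(r, φ) := (T(r), (r·cos φ, r·sin φ, 0)) ∈ ℝ × ℝ³`. Then
for every `r > 0`, `φ ∈ ℝ`, and `(a, b) ∈ ℝ²`, the tangent vector
`a·∂Φ/∂r + b·∂Φ/∂φ`, which has time component `a·T'(r) = −(a/2)·(r/(r + 2m))` and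
spatial component `a·(cos φ, sin φ, 0) + b·r·(−sin φ, cos φ, 0)`, satisfies
`Q_N(...) = (3r/(4(r + 2m)))·a² + r²·b²`. In particular every nonzero tangent
vector to the surface `S_T` parametrized by `Φ` is spacelike. -/
theorem trapped_surface_tangents_spacelike (m : ℝ) (hm : 0 < m)
    (T : ℝ → ℝ) (hT : ∀ r : ℝ, T r = -(1 / 2) * (r - 2 * m * Real.log (1 + r / (2 * m))))
    (Φ : ℝ → ℝ → ℝ × EuclideanSpace ℝ (Fin 3))
    (hΦ : ∀ r φ : ℝ, Φ r φ = (T r, vec3 (r * Real.cos φ) (r * Real.sin φ) 0))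
    (r φ a b : ℝ) (hr : 0 < r) :
    HasDerivAt (fun ρ : ℝ => Φ ρ φ)
      (-(1 / 2) * (r / (r + 2 * m)), vec3 (Real.cos φ) (Real.sin φ) 0) r ∧
    HasDerivAt (fun ψ : ℝ => Φ r ψ)
      (0, vec3 (-(r * Real.sin φ)) (r * Real.cos φ) 0) φ ∧
    QN m (a * (-(1 / 2) * (r / (r + 2 * m))))
        (a • vec3 (Real.cos φ) (Real.sin φ) 0
          + b • vec3 (-(r * Real.sin φ)) (r * Real.cos φ) 0)
        (vec3 (r * Real.cos φ) (r * Real.sin φ) 0)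
      = (3 * r / (4 * (r + 2 * m))) * a ^ 2 + r ^ 2 * b ^ 2 ∧
    ((a, b) ≠ (0, 0) →
      0 < QN m (a * (-(1 / 2) * (r / (r + 2 * m))))
        (a • vec3 (Real.cos φ) (Real.sin φ) 0
          + b • vec3 (-(r * Real.sin φ)) (r * Real.cos φ) 0)
        (vec3 (r * Real.cos φ) (r * Real.sin φ) 0)) := by
  have hrm : 0 < r + 2 * m := by positivity
  have hT' : HasDerivAt T (-(1 / 2) * (r / (r + 2 * m))) r := by
    simpa only [← funext hT] using hasDerivAt_schwarzschild_time hm.ne' hrm.ne'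
  have hQ : QN m (a * (-(1 / 2) * (r / (r + 2 * m))))
      (a • vec3 (cos φ) (sin φ) 0 + b • vec3 (-(r * sin φ)) (r * cos φ) 0)
      (vec3 (r * cos φ) (r * sin φ) 0)
        = (3 * r / (4 * (r + 2 * m))) * a ^ 2 + r ^ 2 * b ^ 2 := by
    rw [QN_eq_of_norm_eq_of_inner_eq hr.ne' ((norm_vec3_polar r φ).trans (abs_of_pos hr))
      (inner_polar_tangent r φ a b), norm_polar_tangent_sq]
    field_simp
    ring
  refine ⟨?_, ?_, hQ, fun hab ↦ hQ ▸ mul_sq_add_mul_sq_pos (by positivity) (by positivity) hab⟩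
  · simpa only [hΦ] using hT'.prodMk (hasDerivAt_vec3_radial r φ)
  · simpa only [hΦ] using (hasDerivAt_const φ (T r)).prodMk (hasDerivAt_vec3_angular r φ)
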